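/- arXiv:1907.13254 — 6 statements merged into one kernel-verified Lean document; each statement's English description precedes it below -/
import Mathlib

section
/- For n = 2, 𝒜(gl_2) is the internal direct sum of the ℂ-subspaces U_2 and U_2·𝒱_2 = {u ∘ 𝒱_2 : u ∈ U_2}; that is, 𝒜(gl_2) = U_2 + U_2·𝒱_2 and U_2 ∩ U_2·𝒱_2 = {0}, so every element of 𝒜(gl_2) is uniquely of the form u + v ∘ 𝒱_2 with u, v ∈ U_2. -/
open scoped BigOperators
open MvPolynomial

noncomputable section

/-- The polynomial ring `Λ = ℂ[x_{ki}]` (variables indexed by pairs `(k, i)`). -/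
abbrev Lam : Type := MvPolynomial (ℕ × ℕ) ℂ

/-- `L`, the field of fractions of `Λ`. -/
abbrev L : Type := FractionRing Lam

/-- The variable `x_{ki}` as an element of `L`. -/
def x (k i : ℕ) : L := algebraMap Lam L (X (k, i))

/-- The algebra automorphism of `Λ` sending `x_v ↦ x_v - 1` and fixing the other variables. -/
def shiftEquiv (v : ℕ × ℕ) : Lam ≃ₐ[ℂ] Lam :=
  AlgEquiv.ofAlgHom
    (aeval (fun w => if w = v then X w - 1 else X w))
    (aeval (fun w => if w = v then X w + 1 else X w))
    (by apply MvPolynomial.algHom_ext; intro w; by_cases h : w = v <;> simp [h])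
    (by apply MvPolynomial.algHom_ext; intro w; by_cases h : w = v <;> simp [h])

/-- The automorphism `δ^{ki}` of `L`, determined by `δ^{ki}(x_{ℓj}) = x_{ℓj} - δ_{ℓk}δ_{ij}`. -/
def δ (k i : ℕ) : L ≃ₐ[ℂ] L := IsFractionRing.algEquivOfAlgEquiv (shiftEquiv (k, i))

/-- Multiplication by `a ∈ L` as a `ℂ`-linear endomorphism `m_a` of `L`. -/
def mulOp (a : L) : Module.End ℂ L := LinearMap.mulLeft ℂ a

/-- A field automorphism of `L` as a `ℂ`-linear endomorphism of `L`. -/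
def lin (e : L ≃ₐ[ℂ] L) : Module.End ℂ L := e.toLinearMap

/-- The rational function `a_{ki}^+`. -/
def aP (k i : ℕ) : L :=
  -((∏ j ∈ Finset.Icc 1 (k + 1), (x (k + 1) j - x k i)) /
    ∏ j ∈ (Finset.Icc 1 k).erase i, (x k j - x k i))

/-- The rational function `a_{ki}^-`. -/
def aM (k i : ℕ) : L :=
  (∏ j ∈ Finset.Icc 1 (k - 1), (x (k - 1) j - x k i)) /
    ∏ j ∈ (Finset.Icc 1 k).erase i, (x k j - x k i)

/-- The operator `A_{ki}^+ = δ^{ki} ∘ m_{a_{ki}^+}`. -/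
def Ap (k i : ℕ) : Module.End ℂ L := lin (δ k i) * mulOp (aP k i)

/-- The operator `A_{ki}^- = (δ^{ki})^{-1} ∘ m_{a_{ki}^-}`. -/
def Am (k i : ℕ) : Module.End ℂ L := lin (δ k i).symm * mulOp (aM k i)

/-- The operator `X_k^+ = ∑_{i=1}^k A_{ki}^+`. -/
def Xp (k : ℕ) : Module.End ℂ L := ∑ i ∈ Finset.Icc 1 k, Ap k i

/-- The operator `X_k^- = ∑_{i=1}^k A_{ki}^-`. -/
def Xm (k : ℕ) : Module.End ℂ L := ∑ i ∈ Finset.Icc 1 k, Am k i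

/-- The operator `X_{kk}`. -/
def Xd (k : ℕ) : Module.End ℂ L :=
  mulOp ((∑ j ∈ Finset.Icc 1 k, (x k j + (j : L) - 1)) -
    ∑ i ∈ Finset.Icc 1 (k - 1), (x (k - 1) i + (i : L) - 1))

/-- The Vandermonde polynomial `∏_{1 ≤ i < j ≤ k} (x_{ki} - x_{kj})`, as an element of `L`. -/
def vand (k : ℕ) : L :=
  ∏ p ∈ (Finset.Icc 1 k ×ˢ Finset.Icc 1 k).filter (fun p => p.1 < p.2),
    (x k p.1 - x k p.2)

/-- The operator `𝒱_k = m_{∏_{i<j}(x_{ki} - x_{kj})}`. -/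
def Vop (k : ℕ) : Module.End ℂ L := mulOp (vand k)

/-- The generating set of `U_n`: the `X_k^±` for `1 ≤ k ≤ n-1` and the `X_{kk}` for `1 ≤ k ≤ n`. -/
def Ugens (n : ℕ) : Set (Module.End ℂ L) :=
  {u | ∃ k, 1 ≤ k ∧ k + 1 ≤ n ∧ (u = Xp k ∨ u = Xm k)} ∪
    {u | ∃ k, 1 ≤ k ∧ k ≤ n ∧ u = Xd k}

/-- `U_n`, the Gelfand–Tsetlin realization of `U(gl_n)` inside `End_ℂ(L)`. -/
def Ualg (n : ℕ) : Subalgebra ℂ (Module.End ℂ L) := Algebra.adjoin ℂ (Ugens n)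

/-- `𝒜(gl_n)`, the subalgebra generated by `U_n` together with `𝒱_2, …, 𝒱_n`. -/
def Agl (n : ℕ) : Subalgebra ℂ (Module.End ℂ L) :=
  Algebra.adjoin ℂ (Ugens n ∪ {u | ∃ k, 2 ≤ k ∧ k ≤ n ∧ u = Vop k})

/-!
Let `σ` be the automorphism of `L` exchanging `x_{21}` and `x_{22}`. The generators of `U_2` are
symmetric in `x_{21}, x_{22}`, so `σ` commutes with all of `U_2`, whereas it anticommutes with
`𝒱_2 = m_{x_{21} - x_{22}}`. Since `𝒱_2` commutes with `U_2` and
`𝒱_2² = (X_{22} - X_{11} - 1)² + 4 X_1^- X_1^+ ∈ U_2`, the space `U_2 + U_2 𝒱_2` is a subalgebra,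
hence equal to `𝒜(gl_2)`. If `u = v 𝒱_2` with `u, v ∈ U_2`, conjugation by `σ` gives `u = -u`,
so `u = 0`, and then `v = 0` because `𝒱_2` is invertible.
-/

theorem Algebra.coe_adjoin_union_singleton_of_commute {R A : Type*} [CommSemiring R] [Semiring A]
    [Algebra R A] {s : Set A} {v : A}
    (hcomm : ∀ a ∈ s, Commute v a) (hsq : v * v ∈ Algebra.adjoin R s) :
    (Algebra.adjoin R (s ∪ {v}) : Set A) =
      {w | ∃ a ∈ Algebra.adjoin R s, ∃ b ∈ Algebra.adjoin R s, w = a + b * v} := by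
  set S := Algebra.adjoin R s
  have hv (a : A) (ha : a ∈ S) : Commute v a :=
    Algebra.commute_of_mem_adjoin_of_forall_mem_commute ha hcomm
  let T : Subalgebra R A :=
    { carrier := {w | ∃ a ∈ S, ∃ b ∈ S, w = a + b * v}
      mul_mem' := by
        rintro _ _ ⟨a, ha, b, hb, rfl⟩ ⟨a', ha', b', hb', rfl⟩
        refine ⟨a * a' + b * b' * (v * v), add_mem (mul_mem ha ha') (mul_mem (mul_mem hb hb') hsq),
          a * b' + b * a', add_mem (mul_mem ha hb') (mul_mem hb ha'), ?_⟩
        have hb_v (c : A) (hc : c ∈ S) : b * v * c = b * c * v := by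
          rw [mul_assoc, (hv c hc).eq, ← mul_assoc]
        simp only [add_mul, mul_add, ← mul_assoc, hb_v a' ha', hb_v b' hb']
        abel
      add_mem' := by
        rintro _ _ ⟨a, ha, b, hb, rfl⟩ ⟨a', ha', b', hb', rfl⟩
        exact ⟨a + a', add_mem ha ha', b + b', add_mem hb hb', by rw [add_mul]; abel⟩
      algebraMap_mem' r := ⟨algebraMap R A r, S.algebraMap_mem r, 0, S.zero_mem, by simp⟩ }
  refine subset_antisymm (Algebra.adjoin_le (S := T) (Set.union_subset ?_ ?_)) ?_
  · exact fun a ha => ⟨a, Algebra.subset_adjoin ha, 0, S.zero_mem, by simp⟩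
  · exact Set.singleton_subset_iff.2 ⟨0, S.zero_mem, 1, S.one_mem, by simp⟩
  · rintro _ ⟨a, ha, b, hb, rfl⟩
    have hS : S ≤ Algebra.adjoin R (s ∪ {v}) := Algebra.adjoin_mono Set.subset_union_left
    exact add_mem (hS ha) (mul_mem (hS hb) (Algebra.subset_adjoin (Or.inr rfl)))

theorem eq_zero_of_eq_mul_of_anticommute {K A : Type*} [Field K] [CharZero K] [Ring A]
    [Algebra K A] {g v s t : A} (hg : IsUnit g) (hv : IsUnit v) (hgs : Commute g s)
    (hgt : Commute g t) (hgv : g * v = -(v * g)) (h : s = t * v) : s = 0 ∧ t = 0 := by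
  have hsg : s * g = -(s * g) :=
    calc s * g = t * (g * v) := by rw [← hgs.eq, h, ← mul_assoc, hgt.eq, mul_assoc]
      _ = -(s * g) := by rw [hgv, h, mul_neg, mul_assoc]
  have hsg0 : s * g = 0 := by
    have : (2 : K) • (s * g) = 0 := by rw [two_smul]; nth_rw 2 [hsg]; exact add_neg_cancel _
    exact (smul_eq_zero_iff_right two_ne_zero).1 this
  have hs : s = 0 := hg.mul_left_eq_zero.1 hsg0
  exact ⟨hs, hv.mul_left_eq_zero.1 (h ▸ hs)⟩

namespace GelfandTsetlin

theorem mulOp_eq_lmul : mulOp = Algebra.lmul ℂ L := rfl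

theorem lin_mul_mulOp (e : L ≃ₐ[ℂ] L) (a : L) : lin e * mulOp a = mulOp (e a) * lin e := by
  ext z; simp [lin, mulOp]

theorem commute_lin_mulOp {e : L ≃ₐ[ℂ] L} {a : L} (h : e a = a) : Commute (lin e) (mulOp a) := by
  rw [Commute, SemiconjBy, lin_mul_mulOp, h]

theorem lin_symm_mul_lin (e : L ≃ₐ[ℂ] L) : lin e.symm * lin e = 1 := by
  ext z; simp [lin]

theorem commute_mulOp_mulOp (a b : L) : Commute (mulOp a) (mulOp b) :=
  (Commute.all a b).map (Algebra.lmul ℂ L)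

theorem isUnit_lin (e : L ≃ₐ[ℂ] L) : IsUnit (lin e) :=
  (Module.End.isUnit_iff _).2 e.bijective

theorem isUnit_mulOp {a : L} (ha : a ≠ 0) : IsUnit (mulOp a) :=
  ha.isUnit.map (Algebra.lmul ℂ L)

theorem x_ne_x {k i l j : ℕ} (h : (k, i) ≠ (l, j)) : x k i ≠ x l j :=
  fun he => h (X_injective (IsFractionRing.injective Lam L he))

theorem δ_eq_fieldEquivOfAlgEquivHom (k i : ℕ) :
    δ k i = IsFractionRing.fieldEquivOfAlgEquivHom ℂ L (shiftEquiv (k, i)) :=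
  AlgEquiv.ext fun _ => rfl

theorem δ_x_of_ne {k i l j : ℕ} (h : (l, j) ≠ (k, i)) : δ k i (x l j) = x l j := by
  simp [δ, x, shiftEquiv, h]

theorem commute_shiftEquiv_renameEquiv {v : ℕ × ℕ} {π : Equiv.Perm (ℕ × ℕ)} (hπ : π v = v) :
    Commute (shiftEquiv v) (renameEquiv ℂ π) := by
  apply AlgEquiv.coe_toAlgHom_injective
  apply MvPolynomial.algHom_ext
  intro w
  by_cases hw : w = v
  · subst hw; simp [shiftEquiv, hπ]
  · have : π w ≠ v := fun h => hw (π.injective (h.trans hπ.symm))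
    simp [shiftEquiv, hw, this]

def σ : L ≃ₐ[ℂ] L :=
  IsFractionRing.fieldEquivOfAlgEquivHom ℂ L (renameEquiv ℂ (Equiv.swap (2, 1) (2, 2)))

theorem σ_x11 : σ (x 1 1) = x 1 1 := by simp [σ, x, Equiv.swap_apply_of_ne_of_ne]
theorem σ_x21 : σ (x 2 1) = x 2 2 := by simp [σ, x]
theorem σ_x22 : σ (x 2 2) = x 2 1 := by simp [σ, x]

theorem commute_δ_σ : Commute (δ 1 1) σ := by
  rw [δ_eq_fieldEquivOfAlgEquivHom]
  exact (commute_shiftEquiv_renameEquiv (Equiv.swap_apply_of_ne_of_ne (by simp) (by simp))).map _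

theorem Ugens_two : Ugens 2 = {Xp 1, Xm 1, Xd 1, Xd 2} := by
  ext u
  simp only [Ugens, Set.mem_union, Set.mem_ofPred_eq, Set.mem_insert_iff, Set.mem_singleton_iff]
  constructor
  · rintro (⟨k, hk, hk', h⟩ | ⟨k, hk, hk', rfl⟩)
    · obtain rfl : k = 1 := by omega
      rcases h with rfl | rfl <;> simp
    · obtain rfl | rfl : k = 1 ∨ k = 2 := by omega
      all_goals simp
  · rintro (rfl | rfl | rfl | rfl)
    exacts [.inl ⟨1, le_rfl, le_rfl, .inl rfl⟩, .inl ⟨1, le_rfl, le_rfl, .inr rfl⟩,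
      .inr ⟨1, le_rfl, by norm_num, rfl⟩, .inr ⟨2, by norm_num, le_rfl, rfl⟩]

theorem Icc_one_two : Finset.Icc 1 2 = {1, 2} := by decide

theorem aP_one_one : aP 1 1 = -((x 2 1 - x 1 1) * (x 2 2 - x 1 1)) := by
  simp [aP, Icc_one_two]

theorem Xp_one : Xp 1 = lin (δ 1 1) * mulOp (aP 1 1) := by simp [Xp, Ap]

theorem mulOp_one : mulOp 1 = 1 := map_one (Algebra.lmul ℂ L)

theorem Xm_one : Xm 1 = lin (δ 1 1).symm := by
  simp [Xm, Am, aM, mulOp_one]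

theorem Xd_one : Xd 1 = mulOp (x 1 1) := by simp [Xd]

theorem Xd_two : Xd 2 = mulOp (x 2 1 + x 2 2 + 1 - x 1 1) := by
  simp [Xd, Icc_one_two]; ring_nf

theorem Vop_two : Vop 2 = mulOp (x 2 1 - x 2 2) := by
  rw [Vop, vand, show (Finset.Icc 1 2 ×ˢ Finset.Icc 1 2).filter (fun p => p.1 < p.2) = {(1, 2)} by
    decide, Finset.prod_singleton]


theorem commute_Vop_two_of_mem_Ugens : ∀ u ∈ Ugens 2, Commute (Vop 2) u := by
  have hδ : δ 1 1 (x 2 1 - x 2 2) = x 2 1 - x 2 2 := by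
    rw [map_sub, δ_x_of_ne (by simp), δ_x_of_ne (by simp)]
  have hδ_symm : (δ 1 1).symm (x 2 1 - x 2 2) = x 2 1 - x 2 2 := by
    rw [AlgEquiv.symm_apply_eq, hδ]
  simp only [Ugens_two, Set.mem_insert_iff, Set.mem_singleton_iff, forall_eq_or_imp, forall_eq,
    Vop_two, Xp_one, Xm_one, Xd_one, Xd_two]
  exact ⟨((commute_lin_mulOp hδ).symm).mul_right (commute_mulOp_mulOp _ _),
    (commute_lin_mulOp hδ_symm).symm, commute_mulOp_mulOp _ _, commute_mulOp_mulOp _ _⟩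

theorem commute_lin_σ_of_mem_Ualg_two {u : Module.End ℂ L} (hu : u ∈ Ualg 2) :
    Commute (lin σ) u := by
  refine Algebra.commute_of_mem_adjoin_of_forall_mem_commute hu ?_
  have hδ : Commute (lin σ) (lin (δ 1 1)) := (commute_δ_σ.symm).map (AlgEquiv.toLinearMapHom ℂ L)
  have hδ_symm : Commute (lin σ) (lin (δ 1 1).symm) :=
    (commute_δ_σ.symm.inv_right).map (AlgEquiv.toLinearMapHom ℂ L)
  have haP : σ (aP 1 1) = aP 1 1 := by
    rw [aP_one_one, map_neg, map_mul, map_sub, map_sub, σ_x21, σ_x22, σ_x11]; ring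
  have hXd : σ (x 2 1 + x 2 2 + 1 - x 1 1) = x 2 1 + x 2 2 + 1 - x 1 1 := by
    rw [map_sub, map_add, map_add, map_one, σ_x21, σ_x22, σ_x11]; ring
  simp only [Ugens_two, Set.mem_insert_iff, Set.mem_singleton_iff, forall_eq_or_imp, forall_eq,
    Xp_one, Xm_one, Xd_one, Xd_two]
  exact ⟨hδ.mul_right (commute_lin_mulOp haP), hδ_symm, commute_lin_mulOp σ_x11,
    commute_lin_mulOp hXd⟩

theorem lin_σ_mul_Vop_two : lin σ * Vop 2 = -(Vop 2 * lin σ) := by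
  rw [Vop_two, lin_mul_mulOp, map_sub, σ_x21, σ_x22, ← neg_sub, mulOp_eq_lmul, map_neg]
  exact neg_mul (Algebra.lmul ℂ L (x 2 1 - x 2 2)) (lin σ)

theorem Vop_two_mul_self_mem_Ualg_two : Vop 2 * Vop 2 ∈ Ualg 2 := by
  have hXmXp : Xm 1 * Xp 1 = mulOp (aP 1 1) := by
    rw [Xm_one, Xp_one, ← mul_assoc, lin_symm_mul_lin, one_mul]
  -- `(a - b)² = (a + b)² - 4ab` with `a = x_{21} - x_{11}`, `b = x_{22} - x_{11}`
  have key : Vop 2 * Vop 2 = (Xd 2 - Xd 1 - 1) * (Xd 2 - Xd 1 - 1) + 4 • (Xm 1 * Xp 1) := by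
    rw [hXmXp, Vop_two, Xd_one, Xd_two, ← mulOp_one, mulOp_eq_lmul, ← map_sub, ← map_sub,
      ← map_mul, ← map_mul, ← map_nsmul, ← map_add, aP_one_one, nsmul_eq_mul]
    congr 1
    push_cast
    ring
  have mem (u) (hu : u ∈ ({Xp 1, Xm 1, Xd 1, Xd 2} : Set _)) : u ∈ Ualg 2 :=
    Algebra.subset_adjoin (Ugens_two ▸ hu)
  have hXd : Xd 2 - Xd 1 - 1 ∈ Ualg 2 :=
    sub_mem (sub_mem (mem _ (by simp)) (mem _ (by simp))) (one_mem _)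
  rw [key]
  exact add_mem (mul_mem hXd hXd) (nsmul_mem (mul_mem (mem _ (by simp)) (mem _ (by simp))) 4)

theorem isUnit_Vop_two : IsUnit (Vop 2) := by
  rw [Vop_two]
  exact isUnit_mulOp (sub_ne_zero.2 (x_ne_x (by decide)))

theorem Agl_two : Agl 2 = Algebra.adjoin ℂ (Ugens 2 ∪ {Vop 2}) := by
  have hV : {u | ∃ k, 2 ≤ k ∧ k ≤ 2 ∧ u = Vop k} = ({Vop 2} : Set (Module.End ℂ L)) := by
    ext u
    simp only [Set.mem_ofPred_eq, Set.mem_singleton_iff]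
    constructor
    · rintro ⟨k, hk, hk', rfl⟩
      obtain rfl : k = 2 := by omega
      rfl
    · rintro rfl
      exact ⟨2, le_rfl, le_rfl, rfl⟩
  rw [Agl, hV]

theorem eq_zero_of_mem_Ualg_two_of_eq_mul_Vop_two {u v : Module.End ℂ L} (hu : u ∈ Ualg 2)
    (hv : v ∈ Ualg 2) (h : u = v * Vop 2) : u = 0 ∧ v = 0 :=
  eq_zero_of_eq_mul_of_anticommute (K := ℂ) (isUnit_lin σ) isUnit_Vop_two
    (commute_lin_σ_of_mem_Ualg_two hu) (commute_lin_σ_of_mem_Ualg_two hv) lin_σ_mul_Vop_two h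

end GelfandTsetlin

open GelfandTsetlin

/-- `𝒜(gl_2)` is the internal direct sum of the subspaces `U_2` and
`U_2·𝒱_2`: every element of `𝒜(gl_2)` is (uniquely) of the form `u + v ∘ 𝒱_2` with
`u, v ∈ U_2`, and `U_2 ∩ U_2·𝒱_2 = {0}`. -/
theorem Agl2_direct_sum_decomposition :
    ((Agl 2 : Set (Module.End ℂ L)) =
      {w | ∃ u ∈ Ualg 2, ∃ v ∈ Ualg 2, w = u + v * Vop 2}) ∧
    ((Ualg 2 : Set (Module.End ℂ L)) ∩ {w | ∃ v ∈ Ualg 2, w = v * Vop 2} = {0}) ∧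
    (∀ u ∈ Ualg 2, ∀ v ∈ Ualg 2, ∀ u' ∈ Ualg 2, ∀ v' ∈ Ualg 2,
      u + v * Vop 2 = u' + v' * Vop 2 → u = u' ∧ v = v') := by
  refine ⟨?_, ?_, ?_⟩
  · rw [Agl_two]
    exact Algebra.coe_adjoin_union_singleton_of_commute commute_Vop_two_of_mem_Ugens
      Vop_two_mul_self_mem_Ualg_two
  · ext w
    simp only [Set.mem_inter_iff, SetLike.mem_coe, Set.mem_ofPred_eq, Set.mem_singleton_iff]
    constructor
    · rintro ⟨hw, v, hv, rfl⟩
      exact (eq_zero_of_mem_Ualg_two_of_eq_mul_Vop_two hw hv rfl).1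
    · rintro rfl
      exact ⟨zero_mem _, 0, zero_mem _, (zero_mul _).symm⟩
  · intro u hu v hv u' hu' v' hv' h
    have hdiff : u - u' = (v' - v) * Vop 2 := by
      rw [sub_mul, sub_eq_sub_iff_add_eq_add, h, add_comm]
    obtain ⟨hu₀, hv₀⟩ :=
      eq_zero_of_mem_Ualg_two_of_eq_mul_Vop_two (sub_mem hu hu') (sub_mem hv' hv) hdiff
    exact ⟨sub_eq_zero.1 hu₀, (sub_eq_zero.1 hv₀).symm⟩
end
end

section
/- For n = 2, set c = X_{11} + X_{22} and C = X_{11}² + X_1⁺ ∘ X_1⁻ + X_1⁻ ∘ X_1⁺ + X_{22}² in End_ℂ(L). Then c = m_{x_{21}+x_{22}+1}, C = m_{x_{21}²+x_{22}²+x_{21}+x_{22}}, and −c² + 2C + 1 = 𝒱_2² (where 1 denotes the identity operator). In particular 𝒱_2² equals the image of a central element of U(gl_2) under the Gelfand–Tsetlin realization. -/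
open scoped BigOperators
open MvPolynomial

noncomputable section

/-!
For `n = 2` the only operators that are not multiplication operators are `X_1^± = A_{11}^±`.
Since `a_{11}^- = 1`, `X_1^-` is just `(δ^{11})⁻¹`, so `X_1^- X_1^+ = m_{a_{11}^+}` and
`X_1^+ X_1^- = δ^{11} m_{a_{11}^+} (δ^{11})⁻¹ = m_{δ^{11}(a_{11}^+)}`. Hence `c`, `C` and `𝒱_2²`
are all images of elements of `L` under the algebra map `a ↦ m_a`, and the three identities
become polynomial identities in `x_{11}, x_{21}, x_{22}`.
-/

lemma mulOp_eq_lmul (a : L) : mulOp a = Algebra.lmul ℂ L a := rfl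

lemma lin_mul_mulOp_mul_lin_symm (e : L ≃ₐ[ℂ] L) (a : L) :
    lin e * mulOp a * lin e.symm = mulOp (e a) := by
  ext f
  simp [lin, mulOp]

lemma lin_symm_mul_lin (e : L ≃ₐ[ℂ] L) : lin e.symm * lin e = 1 := by
  ext f
  simp [lin]

lemma δ_x (k i l j : ℕ) :
    δ k i (x l j) = if (l, j) = (k, i) then x l j - 1 else x l j := by
  rw [δ, x, IsFractionRing.algEquivOfAlgEquiv_algebraMap]
  by_cases h : (l, j) = (k, i) <;> simp [h, shiftEquiv]

lemma Xd_one : Xd 1 = mulOp (x 1 1) := by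
  simp [Xd]

lemma Xd_two : Xd 2 = mulOp (x 2 1 + x 2 2 + 1 - x 1 1) := by
  simp only [Xd, show Finset.Icc 1 2 = {1, 2} by decide, Finset.sum_pair (by decide : (1 : ℕ) ≠ 2),
    Nat.reduceSub, Finset.Icc_self, Finset.sum_singleton]
  congr 1
  push_cast
  ring

lemma aP_one_one : aP 1 1 = -((x 2 1 - x 1 1) * (x 2 2 - x 1 1)) := by
  simp [aP, show Finset.Icc 1 2 = {1, 2} by decide]

lemma Xp_one : Xp 1 = lin (δ 1 1) * mulOp (aP 1 1) := by
  simp [Xp, Ap]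

lemma Xm_one : Xm 1 = lin (δ 1 1).symm := by
  rw [Xm, Finset.Icc_self, Finset.sum_singleton, Am, show aM 1 1 = 1 by simp [aM], mulOp_eq_lmul,
    map_one, mul_one]

lemma Xp_one_mul_Xm_one :
    Xp 1 * Xm 1 = mulOp (-((x 2 1 - (x 1 1 - 1)) * (x 2 2 - (x 1 1 - 1)))) := by
  rw [Xp_one, Xm_one, lin_mul_mulOp_mul_lin_symm, aP_one_one]
  simp [δ_x]

lemma Xm_one_mul_Xp_one : Xm 1 * Xp 1 = mulOp (-((x 2 1 - x 1 1) * (x 2 2 - x 1 1))) := by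
  rw [Xp_one, Xm_one, ← mul_assoc, lin_symm_mul_lin, one_mul, aP_one_one]

lemma vand_two : vand 2 = x 2 1 - x 2 2 := by
  rw [vand, show (Finset.Icc 1 2 ×ˢ Finset.Icc 1 2).filter (fun p => p.1 < p.2) = {(1, 2)} by
    decide]
  simp

/-- for `n = 2`, with `c = X_{11} + X_{22}` and
`C = X_{11}² + X_1⁺X_1⁻ + X_1⁻X_1⁺ + X_{22}²`, we have
`c = m_{x_{21}+x_{22}+1}`, `C = m_{x_{21}²+x_{22}²+x_{21}+x_{22}}`, and
`−c² + 2C + 1 = 𝒱_2²`. -/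
theorem gelfand_invariants_and_vand_squared :
    Xd 1 + Xd 2 = mulOp (x 2 1 + x 2 2 + 1) ∧
    Xd 1 ^ 2 + Xp 1 * Xm 1 + Xm 1 * Xp 1 + Xd 2 ^ 2 =
      mulOp (x 2 1 ^ 2 + x 2 2 ^ 2 + x 2 1 + x 2 2) ∧
    -(Xd 1 + Xd 2) ^ 2 +
        2 * (Xd 1 ^ 2 + Xp 1 * Xm 1 + Xm 1 * Xp 1 + Xd 2 ^ 2) + 1 =
      (Vop 2) ^ 2 := by
  have hc : Xd 1 + Xd 2 = mulOp (x 2 1 + x 2 2 + 1) := by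
    rw [Xd_one, Xd_two]
    simp only [mulOp_eq_lmul, ← map_add]
    congr 1
    ring
  have hC : Xd 1 ^ 2 + Xp 1 * Xm 1 + Xm 1 * Xp 1 + Xd 2 ^ 2 =
      mulOp (x 2 1 ^ 2 + x 2 2 ^ 2 + x 2 1 + x 2 2) := by
    rw [Xd_one, Xd_two, Xp_one_mul_Xm_one, Xm_one_mul_Xp_one]
    simp only [mulOp_eq_lmul, ← map_pow, ← map_add]
    congr 1
    ring
  refine ⟨hc, hC, ?_⟩
  rw [hc, hC, Vop, vand_two]
  simp only [mulOp_eq_lmul, ← map_pow]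
  calc _ = Algebra.lmul ℂ L
          (-(x 2 1 + x 2 2 + 1) ^ 2 + 2 * (x 2 1 ^ 2 + x 2 2 ^ 2 + x 2 1 + x 2 2) + 1) := by
        simp only [map_add, map_neg, map_mul, map_ofNat, map_one]
    _ = _ := by
        congr 1
        ring
end
end

section
/- For n = 3, the following commutator identities hold in End_ℂ(L), where [a,b] = a∘b − b∘a: [𝒱_2, X_2⁺] = A_{21}⁺ − A_{22}⁺ and [𝒱_2, X_2⁻] = −(A_{21}⁻ − A_{22}⁻). Consequently the operators A_{21}^± = ½(X_2^± ± [𝒱_2, X_2^±]) and A_{22}^± = ½(X_2^± ∓ [𝒱_2, X_2^±]) lie in 𝒜(gl_3). -/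
open scoped BigOperators
open MvPolynomial

noncomputable section

/-! Each `A_{2i}^± = e ∘ m_a` is an eigenvector of `ad 𝒱_2`: moving `m_v` past the automorphism
`e` replaces `v` by `e v`, and `δ^{21}`, `δ^{22}` shift the Vandermonde `x_{21} - x_{22}` by the
constants `-1`, `+1`. The eigenvalues of `A_{21}^±` and `A_{22}^±` are opposite, so
`X_2^± = A_{21}^± + A_{22}^±` and `[𝒱_2, X_2^±] = ±(A_{21}^± - A_{22}^±)` recover both
summands after dividing by `2`. -/

lemma δ_apply_x_of_ne {k i l j : ℕ} (h : (l, j) ≠ (k, i)) : δ k i (x l j) = x l j := by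
  rw [δ, x, IsFractionRing.algEquivOfAlgEquiv_algebraMap]
  simp [shiftEquiv, h]

lemma δ_apply_x_self (k i : ℕ) : δ k i (x k i) = x k i - 1 := by
  rw [δ, x, IsFractionRing.algEquivOfAlgEquiv_algebraMap]
  simp [shiftEquiv]

lemma AlgEquiv.symm_apply_eq_sub_algebraMap_neg {R A : Type*} [CommRing R] [Ring A] [Algebra R A]
    (e : A ≃ₐ[R] A) {v : A} {c : R} (h : e v = v - algebraMap R A c) :
    e.symm v = v - algebraMap R A (-c) := by
  rw [AlgEquiv.symm_apply_eq, map_sub, h, AlgEquiv.commutes, map_neg]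
  abel

lemma mulOp_commutator_lin_mul_mulOp (e : L ≃ₐ[ℂ] L) {v : L} (a : L) {c : ℂ}
    (h : e v = v - algebraMap ℂ L c) :
    mulOp v * (lin e * mulOp a) - lin e * mulOp a * mulOp v = c • (lin e * mulOp a) := by
  ext f
  simp only [LinearMap.sub_apply, Module.End.mul_apply, LinearMap.smul_apply, mulOp, lin,
    LinearMap.mulLeft_apply, AlgEquiv.toLinearMap_apply, map_mul, h]
  rw [Algebra.smul_def]
  ring

lemma δ_two_one_vand_two : δ 2 1 (vand 2) = vand 2 - algebraMap ℂ L 1 := by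
  rw [vand_two, map_sub, δ_apply_x_self, δ_apply_x_of_ne (by decide), map_one]
  ring

lemma δ_two_two_vand_two : δ 2 2 (vand 2) = vand 2 - algebraMap ℂ L (-1) := by
  rw [vand_two, map_sub, δ_apply_x_self, δ_apply_x_of_ne (by decide), map_neg, map_one]
  ring

lemma Vop_two_commutator_Ap_two_one : Vop 2 * Ap 2 1 - Ap 2 1 * Vop 2 = Ap 2 1 := by
  rw [Vop, Ap, mulOp_commutator_lin_mul_mulOp _ _ δ_two_one_vand_two, one_smul]

lemma Vop_two_commutator_Ap_two_two : Vop 2 * Ap 2 2 - Ap 2 2 * Vop 2 = -Ap 2 2 := by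
  rw [Vop, Ap, mulOp_commutator_lin_mul_mulOp _ _ δ_two_two_vand_two]
  module

lemma Vop_two_commutator_Am_two_one : Vop 2 * Am 2 1 - Am 2 1 * Vop 2 = -Am 2 1 := by
  rw [Vop, Am, mulOp_commutator_lin_mul_mulOp _ _
    ((δ 2 1).symm_apply_eq_sub_algebraMap_neg δ_two_one_vand_two)]
  module

lemma Vop_two_commutator_Am_two_two : Vop 2 * Am 2 2 - Am 2 2 * Vop 2 = Am 2 2 := by
  rw [Vop, Am, mulOp_commutator_lin_mul_mulOp _ _
    ((δ 2 2).symm_apply_eq_sub_algebraMap_neg δ_two_two_vand_two), neg_neg, one_smul]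

lemma Xp_two : Xp 2 = Ap 2 1 + Ap 2 2 := by
  rw [Xp, show Finset.Icc 1 2 = {1, 2} by decide, Finset.sum_pair (by norm_num)]

lemma Xm_two : Xm 2 = Am 2 1 + Am 2 2 := by
  rw [Xm, show Finset.Icc 1 2 = {1, 2} by decide, Finset.sum_pair (by norm_num)]

lemma Xp_mem_Agl {k n : ℕ} (hk : 1 ≤ k) (hkn : k + 1 ≤ n) : Xp k ∈ Agl n :=
  Algebra.subset_adjoin (Or.inl (Or.inl ⟨k, hk, hkn, Or.inl rfl⟩))

lemma Xm_mem_Agl {k n : ℕ} (hk : 1 ≤ k) (hkn : k + 1 ≤ n) : Xm k ∈ Agl n :=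
  Algebra.subset_adjoin (Or.inl (Or.inl ⟨k, hk, hkn, Or.inr rfl⟩))

lemma Vop_mem_Agl {k n : ℕ} (hk : 2 ≤ k) (hkn : k ≤ n) : Vop k ∈ Agl n :=
  Algebra.subset_adjoin (Or.inr ⟨k, hk, hkn, rfl⟩)

lemma Submodule.mem_of_add_mem_of_sub_mem {K M : Type*} [Field K] [AddCommGroup M] [Module K M]
    (h2 : (2 : K) ≠ 0) (S : Submodule K M) {a b : M} (hadd : a + b ∈ S) (hsub : a - b ∈ S) :
    a ∈ S ∧ b ∈ S := by
  have ha : a = (2 : K)⁻¹ • ((a + b) + (a - b)) := by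
    rw [add_add_sub_cancel, ← two_smul K, smul_smul, inv_mul_cancel₀ h2, one_smul]
  have hb : b = (2 : K)⁻¹ • ((a + b) - (a - b)) := by
    rw [add_sub_sub_cancel, ← two_smul K, smul_smul, inv_mul_cancel₀ h2, one_smul]
  exact ⟨ha ▸ S.smul_mem _ (S.add_mem hadd hsub), hb ▸ S.smul_mem _ (S.sub_mem hadd hsub)⟩

/-- for `n = 3`, `[𝒱_2, X_2⁺] = A_{21}⁺ − A_{22}⁺` and
`[𝒱_2, X_2⁻] = −(A_{21}⁻ − A_{22}⁻)`; consequently `A_{21}^±, A_{22}^± ∈ 𝒜(gl_3)`. -/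
theorem vand2_commutators_and_membership :
    Vop 2 * Xp 2 - Xp 2 * Vop 2 = Ap 2 1 - Ap 2 2 ∧
    Vop 2 * Xm 2 - Xm 2 * Vop 2 = -(Am 2 1 - Am 2 2) ∧
    Ap 2 1 ∈ Agl 3 ∧ Ap 2 2 ∈ Agl 3 ∧ Am 2 1 ∈ Agl 3 ∧ Am 2 2 ∈ Agl 3 := by
  have hP : Vop 2 * Xp 2 - Xp 2 * Vop 2 = Ap 2 1 - Ap 2 2 := by
    rw [Xp_two, mul_add, add_mul, add_sub_add_comm, Vop_two_commutator_Ap_two_one,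
      Vop_two_commutator_Ap_two_two, sub_eq_add_neg]
  have hM : Vop 2 * Xm 2 - Xm 2 * Vop 2 = -(Am 2 1 - Am 2 2) := by
    rw [Xm_two, mul_add, add_mul, add_sub_add_comm, Vop_two_commutator_Am_two_one,
      Vop_two_commutator_Am_two_two, neg_sub, neg_add_eq_sub]
  have hV : Vop 2 ∈ Agl 3 := Vop_mem_Agl le_rfl (by norm_num)
  have hXp : Xp 2 ∈ Agl 3 := Xp_mem_Agl one_le_two le_rfl
  have hXm : Xm 2 ∈ Agl 3 := Xm_mem_Agl one_le_two le_rfl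
  have hsubP : Ap 2 1 - Ap 2 2 ∈ Agl 3 :=
    hP ▸ sub_mem (mul_mem hV hXp) (mul_mem hXp hV)
  have hsubM : Am 2 1 - Am 2 2 ∈ Agl 3 :=
    neg_neg (Am 2 1 - Am 2 2) ▸ neg_mem (hM ▸ sub_mem (mul_mem hV hXm) (mul_mem hXm hV))
  obtain ⟨hAp1, hAp2⟩ := Submodule.mem_of_add_mem_of_sub_mem (S := Subalgebra.toSubmodule (Agl 3))
    two_ne_zero (Xp_two ▸ hXp) hsubP
  obtain ⟨hAm1, hAm2⟩ := Submodule.mem_of_add_mem_of_sub_mem (S := Subalgebra.toSubmodule (Agl 3))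
    two_ne_zero (Xm_two ▸ hXm) hsubM
  exact ⟨hP, hM, hAp1, hAp2, hAm1, hAm2⟩
end
end

section
/- For n = 3, the identity [A_{21}⁺, A_{21}⁻] + [A_{22}⁺, A_{22}⁻] = X_{22} − X_{33} holds in End_ℂ(L). -/
open scoped BigOperators
open MvPolynomial

noncomputable section

/-! Since `δ ∘ m_a = m_{δ a} ∘ δ`, each commutator `[A_{2i}⁺, A_{2i}⁻]` is multiplication by
`δ^{2i}(a_{2i}⁺) a_{2i}⁻ - (δ^{2i})⁻¹(a_{2i}⁻) a_{2i}⁺`. These two rational functions have poles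
where `x_{21} - x_{22} ∈ {0, ±1}`, which cancel in their sum, leaving the linear polynomial
defining `X_{22} - X_{33}`. -/

lemma shiftEquiv_X (v w : ℕ × ℕ) :
    shiftEquiv v (X w) = if w = v then X w - 1 else X w := by
  simp [shiftEquiv]

lemma shiftEquiv_symm_X (v w : ℕ × ℕ) :
    (shiftEquiv v).symm (X w) = if w = v then X w + 1 else X w := by
  simp [shiftEquiv, AlgEquiv.ofAlgHom_symm_apply]

lemma δ_symm_x (k i l j : ℕ) :
    (δ k i).symm (x l j) = if (l, j) = (k, i) then x l j + 1 else x l j := by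
  rw [δ, x, IsFractionRing.algEquivOfAlgEquiv_symm,
    IsFractionRing.algEquivOfAlgEquiv_algebraMap, shiftEquiv_symm_X]
  split <;> simp

lemma δ_aP (k i : ℕ) :
    δ k i (aP k i) = -((∏ j ∈ Finset.Icc 1 (k + 1), (x (k + 1) j - (x k i - 1))) /
      ∏ j ∈ (Finset.Icc 1 k).erase i, (x k j - (x k i - 1))) := by
  simp only [aP, map_neg, map_div₀, map_prod, map_sub, δ_x]
  congr 2 <;> refine Finset.prod_congr rfl fun j hj => ?_
  · simp
  · simp [Finset.ne_of_mem_erase hj]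

lemma δ_symm_aM (k i : ℕ) :
    (δ k i).symm (aM k i) = (∏ j ∈ Finset.Icc 1 (k - 1), (x (k - 1) j - (x k i + 1))) /
      ∏ j ∈ (Finset.Icc 1 k).erase i, (x k j - (x k i + 1)) := by
  simp only [aM, map_div₀, map_prod, map_sub, δ_symm_x]
  congr 1 <;> refine Finset.prod_congr rfl fun j hj => ?_
  · have : k - 1 ≠ k := by simp at hj; omega
    simp [this]
  · simp [Finset.ne_of_mem_erase hj]

lemma mulOp_add (a b : L) : mulOp (a + b) = mulOp a + mulOp b :=
  map_add (LinearMap.mul ℂ L) a b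

lemma mulOp_sub (a b : L) : mulOp (a - b) = mulOp a - mulOp b :=
  map_sub (LinearMap.mul ℂ L) a b

lemma lin_mul_lin_symm_mul_sub (e : L ≃ₐ[ℂ] L) (a b : L) :
    lin e * mulOp a * (lin e.symm * mulOp b) - lin e.symm * mulOp b * (lin e * mulOp a) =
      mulOp (e a * b - e.symm b * a) := by
  ext f
  simp [lin, mulOp, mul_assoc, sub_mul]

lemma x_sub_x_ne_intCast {k i l j : ℕ} (h : (k, i) ≠ (l, j)) (c : ℤ) :
    x k i - x l j ≠ c := by
  intro hc
  have hpoly : (X (k, i) - X (l, j) : Lam) = c :=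
    IsFractionRing.injective Lam L (by simpa [x] using hc)
  have := congrArg (eval fun v => if v = (k, i) then (c + 1 : ℂ) else 0) hpoly
  simp [Ne.symm h] at this

/-- The two summands are the coefficients of `[A_{2i}⁺, A_{2i}⁻]` for `x_{2i} = u` and `x_{2i} = v`,
with `a = x_{11}` and `y_j = x_{3j}`. -/
lemma commutator_sum_identity {K : Type*} [Field K] (a u v y₁ y₂ y₃ : K)
    (huv : ∀ c : ℤ, u - v ≠ c) :
    -((y₁ - (u - 1)) * ((y₂ - (u - 1)) * (y₃ - (u - 1))) / (v - (u - 1))) * ((a - u) / (v - u)) -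
        (a - (u + 1)) / (v - (u + 1)) * -((y₁ - u) * ((y₂ - u) * (y₃ - u)) / (v - u)) +
      (-((y₁ - (v - 1)) * ((y₂ - (v - 1)) * (y₃ - (v - 1))) / (u - (v - 1))) * ((a - v) / (u - v)) -
        (a - (v + 1)) / (u - (v + 1)) * -((y₁ - v) * ((y₂ - v) * (y₃ - v)) / (u - v))) =
    u + v + 1 - a - (y₁ + y₂ + y₃ + 2 - u - v) := by
  have h₀ : u - v ≠ 0 := by exact_mod_cast huv 0
  have h₁ : u - v - 1 ≠ 0 := sub_ne_zero.2 (by exact_mod_cast huv 1)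
  have h₂ : u - v + 1 ≠ 0 := by
    rw [← sub_neg_eq_add]; exact sub_ne_zero.2 (by exact_mod_cast huv (-1))
  have e₁ : v - u ≠ 0 := by contrapose! h₀; linear_combination -h₀
  have e₂ : v - (u - 1) ≠ 0 := by contrapose! h₁; linear_combination -h₁
  have e₃ : v - (u + 1) ≠ 0 := by contrapose! h₂; linear_combination -h₂
  have e₄ : u - (v - 1) ≠ 0 := by contrapose! h₂; linear_combination h₂
  have e₅ : u - (v + 1) ≠ 0 := by contrapose! h₁; linear_combination h₁
  field_simp
  ring

/-- `[A_{21}⁺, A_{21}⁻] + [A_{22}⁺, A_{22}⁻] = X_{22} − X_{33}`. -/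
theorem sum_of_commutators_eq_Xd2_sub_Xd3 :
    (Ap 2 1 * Am 2 1 - Am 2 1 * Ap 2 1) + (Ap 2 2 * Am 2 2 - Am 2 2 * Ap 2 2) =
      Xd 2 - Xd 3 := by
  simp only [Ap, Am, lin_mul_lin_symm_mul_sub, δ_aP, δ_symm_aM, Xd, ← mulOp_add, ← mulOp_sub]
  congr 1
  simp only [aP, aM, show Finset.Icc 1 3 = ({1, 2, 3} : Finset ℕ) from rfl,
    show Finset.Icc 1 2 = ({1, 2} : Finset ℕ) from rfl,
    show Finset.Icc 1 1 = ({1} : Finset ℕ) from rfl,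
    show ({1, 2} : Finset ℕ).erase 1 = {2} from rfl,
    show ({1, 2} : Finset ℕ).erase 2 = {1} from rfl]
  simp only [Finset.mem_insert, Finset.mem_singleton, Nat.reduceAdd, Nat.add_one_sub_one,
    Nat.reduceEqDiff, OfNat.one_ne_ofNat, or_self, not_false_eq_true, Finset.prod_insert,
    Finset.sum_insert, Finset.prod_singleton, Finset.sum_singleton, Nat.cast_one, Nat.cast_ofNat]
  linear_combination commutator_sum_identity (x 1 1) (x 2 1) (x 2 2) (x 3 1) (x 3 2) (x 3 3)
    (x_sub_x_ne_intCast (by decide))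
end
end

section
/- Both m_{1/x} and m_{1/(x−1)} belong to U_f. -/
/-! The products `Y X = m_{f(x)/x}` and `X Y = m_{f(x-1)/(x-1)}` lie in `U_f`, as do all `m_p`.
Dividing `F = F(a) + (x - a) q` by `x - a` gives `F/(x-a) = F(a)/(x-a) + q`, so `m_{1/(x-a)}` lies
in `U_f` as soon as `m_{F/(x-a)}` does and `F(a) ≠ 0`. Apply this to `F = f`, `a = 0` and to
`F = f(x-1)`, `a = 1`; in both cases `F(a) = f(0) ≠ 0`. -/

noncomputable section

/-- The polynomial ring `ℂ[x]`. -/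
abbrev Pc : Type := Polynomial ℂ

/-- `L = ℂ(x)`, the field of rational functions in one variable. -/
abbrev L1 : Type := FractionRing Pc

/-- The variable `x` as an element of `L`. -/
def x1 : L1 := algebraMap Pc L1 Polynomial.X

/-- The algebra automorphism of `ℂ[x]` with `x ↦ x − 1`. -/
def shift1 : Pc ≃ₐ[ℂ] Pc :=
  AlgEquiv.ofAlgHom
    (Polynomial.aeval (Polynomial.X - 1))
    (Polynomial.aeval (Polynomial.X + 1))
    (by apply Polynomial.algHom_ext; simp)
    (by apply Polynomial.algHom_ext; simp)

/-- The ℂ-algebra automorphism `δ` of `L = ℂ(x)` with `δ(x) = x − 1`. -/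
def δ1 : L1 ≃ₐ[ℂ] L1 := IsFractionRing.algEquivOfAlgEquiv shift1

/-- Multiplication by `a ∈ L` as a ℂ-linear endomorphism `m_a` of `L`. -/
def mul1 (a : L1) : Module.End ℂ L1 := LinearMap.mulLeft ℂ a

/-- The operator `X = δ ∘ m_{f(x)/x}`. -/
def Xop (f : Pc) : Module.End ℂ L1 :=
  δ1.toLinearMap * mul1 (algebraMap Pc L1 f / x1)

/-- The operator `Y = δ^{-1}`. -/
def Yop : Module.End ℂ L1 := δ1.symm.toLinearMap

/-- `U_f`, the unital ℂ-subalgebra of `End_ℂ(L)` generated by the polynomial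
multiplication operators together with `X` and `Y`. -/
def Uf (f : Pc) : Subalgebra ℂ (Module.End ℂ L1) :=
  Algebra.adjoin ℂ
    ({u | ∃ p : Pc, u = mul1 (algebraMap Pc L1 p)} ∪ {Xop f, Yop})

open Polynomial

theorem inv_X_sub_C_mem_of_div_X_sub_C_mem {K : Type*} [Field K]
    (A : Subalgebra K (FractionRing K[X]))
    (hA : ∀ p : K[X], algebraMap K[X] (FractionRing K[X]) p ∈ A) {F : K[X]} {a : K}
    (hFa : F.eval a ≠ 0)
    (hdiv : algebraMap K[X] _ F / algebraMap K[X] (FractionRing K[X]) (X - C a) ∈ A) :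
    (algebraMap K[X] (FractionRing K[X]) (X - C a))⁻¹ ∈ A := by
  set d := algebraMap K[X] (FractionRing K[X]) (X - C a) with hd_def
  have hd : d ≠ 0 :=
    (map_ne_zero_iff _ (IsFractionRing.injective K[X] _)).mpr (X_sub_C_ne_zero a)
  have hsplit : algebraMap K[X] _ F / d
      = F.eval a • d⁻¹ + algebraMap K[X] (FractionRing K[X]) (F /ₘ (X - C a)) := by
    have hC : algebraMap K[X] (FractionRing K[X]) (C (F.eval a)) = algebraMap K _ (F.eval a) :=
      (IsScalarTower.algebraMap_apply K K[X] _ _).symm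
    conv_lhs => rw [← modByMonic_add_div F (X - C a), modByMonic_X_sub_C_eq_C_eval]
    rw [map_add, map_mul, hC, Algebra.smul_def, ← hd_def]
    field_simp
  have hinv : d⁻¹ = (F.eval a)⁻¹ • (algebraMap K[X] _ F / d
      - algebraMap K[X] (FractionRing K[X]) (F /ₘ (X - C a))) := by
    rw [hsplit, add_sub_cancel_right, smul_smul, inv_mul_cancel₀ hFa, one_smul]
  rw [hinv]
  exact A.smul_mem (A.sub_mem hdiv (hA _)) _

theorem AlgEquiv.toLinearMap_mul_mulLeft_mul_symm {R A : Type*} [CommSemiring R] [Semiring A]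
    [Algebra R A] (σ : A ≃ₐ[R] A) (a : A) :
    σ.toLinearMap * LinearMap.mulLeft R a * σ.symm.toLinearMap = LinearMap.mulLeft R (σ a) := by
  ext v
  simp

theorem Yop_mul_Xop (f : Pc) : Yop * Xop f = mul1 (algebraMap Pc L1 f / x1) := by
  ext v
  simp [Yop, Xop]

theorem δ1_algebraMap (p : Pc) : δ1 (algebraMap Pc L1 p) = algebraMap Pc L1 (p.comp (X - 1)) := by
  simp [δ1, shift1, comp_eq_aeval]

theorem δ1_x1 : δ1 x1 = x1 - 1 := by
  simp [x1, δ1_algebraMap]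

theorem Xop_mul_Yop (f : Pc) :
    Xop f * Yop = mul1 (algebraMap Pc L1 (f.comp (X - 1)) / (x1 - 1)) := by
  rw [Xop, Yop, mul1, δ1.toLinearMap_mul_mulLeft_mul_symm, map_div₀, δ1_algebraMap, δ1_x1, mul1]

/-- both `m_{1/x}` and `m_{1/(x−1)}` belong to `U_f`. -/
theorem inv_x_and_inv_x_sub_one_mem_Uf (f : Pc) (hf : Polynomial.eval 0 f ≠ 0) :
    mul1 (1 / x1) ∈ Uf f ∧ mul1 (1 / (x1 - 1)) ∈ Uf f := by
  let A := (Uf f).comap (Algebra.lmul ℂ L1)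
  have hpoly (p : Pc) : algebraMap Pc L1 p ∈ A := Algebra.subset_adjoin (Or.inl ⟨p, rfl⟩)
  have hX : Xop f ∈ Uf f := Algebra.subset_adjoin (Or.inr (by simp))
  have hY : Yop ∈ Uf f := Algebra.subset_adjoin (Or.inr (by simp))
  have hx0 : x1 = algebraMap Pc L1 (X - C 0) := by simp [x1]
  have hx1 : x1 - 1 = algebraMap Pc L1 (X - C 1) := by simp [x1]
  rw [one_div, one_div, hx1, hx0]
  constructor
  · have hdiv : mul1 (algebraMap Pc L1 f / algebraMap Pc L1 (X - C 0)) ∈ Uf f := by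
      simpa only [Yop_mul_Xop, hx0] using mul_mem hY hX
    exact inv_X_sub_C_mem_of_div_X_sub_C_mem A hpoly hf hdiv
  · have hdiv : mul1 (algebraMap Pc L1 (f.comp (X - 1)) / algebraMap Pc L1 (X - C 1)) ∈ Uf f := by
      simpa only [Xop_mul_Yop, hx1] using mul_mem hX hY
    exact inv_X_sub_C_mem_of_div_X_sub_C_mem A hpoly (by simpa using hf) hdiv
end
end

section
/- For every integer k ≥ 1, the multiplication operator m_{1/(x+k)} belongs to U_f. -/
/-!
Let `S = {a ∈ ℂ(x) | m_a ∈ U_f}`, a `ℂ[x]`-subalgebra of `ℂ(x)`. Since `Y m_a X = m_{δ⁻¹(a) f/x}`,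
`S` is stable under `a ↦ δ⁻¹(a) f/x`. For `a = 1` this gives `f/x ∈ S`, and `f = f(0) + x q` with
`f(0) ≠ 0` yields `1/x ∈ S`. If `1/(x+k) ∈ S`, applying the map to its powers gives
`f/(x+k+1)ⁿ ∈ S` for all `n`. Taking `n` one more than the multiplicity of the root `-(k+1)` of `f`,
this is `g/(x+k+1)` with `g(-(k+1)) ≠ 0`, and as before `1/(x+k+1) ∈ S`.
-/

noncomputable section

open Polynomial

section PartialFractions

variable {K L : Type*} [Field K] [Field L] [Algebra K[X] L] (S : Subalgebra K[X] L)

theorem inv_X_sub_C_mem_of_div_mem {g : K[X]} {a : K} (hga : g.eval a ≠ 0)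
    (h : algebraMap K[X] L g / algebraMap K[X] L (X - C a) ∈ S) :
    (algebraMap K[X] L (X - C a))⁻¹ ∈ S := by
  set w := algebraMap K[X] L (X - C a)
  rcases eq_or_ne w 0 with hw | hw
  · simp [hw]
  obtain ⟨r, hr⟩ := X_sub_C_dvd_sub_C_eval (p := g) (a := a)
  have hg : algebraMap K[X] L g = algebraMap K[X] L (C (g.eval a)) + w * algebraMap K[X] L r := by
    rw [← map_mul, ← map_add, ← hr, add_sub_cancel]
  -- `g / w = g(a) / w + r`
  have hw_inv : w⁻¹ = algebraMap K[X] L (C (g.eval a)⁻¹) *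
      (algebraMap K[X] L g / w - algebraMap K[X] L r) := by
    rw [hg, add_div, mul_div_cancel_left₀ _ hw, add_sub_cancel_right, ← mul_div_assoc, ← map_mul,
      ← C_mul, inv_mul_cancel₀ hga, C_1, map_one, one_div]
  rw [hw_inv]
  exact mul_mem (S.algebraMap_mem _) (sub_mem h (S.algebraMap_mem r))

theorem inv_X_sub_C_mem_of_forall_div_pow_mem {f : K[X]} (hf : f ≠ 0) {a : K}
    (h : ∀ n : ℕ, algebraMap K[X] L f / algebraMap K[X] L (X - C a) ^ n ∈ S) :
    (algebraMap K[X] L (X - C a))⁻¹ ∈ S := by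
  obtain ⟨g, hfg, hga⟩ := f.exists_eq_pow_rootMultiplicity_mul_and_not_dvd hf a
  rcases eq_or_ne (algebraMap K[X] L (X - C a)) 0 with hw | hw
  · simp [hw]
  refine inv_X_sub_C_mem_of_div_mem S (g := g) (fun hg0 => hga (dvd_iff_isRoot.2 hg0)) ?_
  convert h (f.rootMultiplicity a + 1) using 1
  generalize f.rootMultiplicity a = m at hfg
  rw [hfg, map_mul, map_pow, pow_succ]
  field_simp

end PartialFractions

theorem x1_ne_zero : x1 ≠ 0 := by
  simp [x1, X_ne_zero]

theorem x1_add_natCast (k : ℕ) : x1 + k = algebraMap Pc L1 (X - C (-(k : ℂ))) := by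
  rw [map_sub, ← Polynomial.algebraMap_eq, ← IsScalarTower.algebraMap_apply, map_neg, map_natCast,
    sub_neg_eq_add, x1]

theorem δ1_symm_x1 : δ1.symm x1 = x1 + 1 := by
  simp [x1, δ1, IsFractionRing.algEquivOfAlgEquiv_symm, shift1]

theorem Yop_mul_mul1_mul_Xop (f : Pc) (a : L1) :
    Yop * mul1 a * Xop f = mul1 (δ1.symm a * (algebraMap Pc L1 f / x1)) := by
  ext v
  simp only [Yop, Xop, mul1, Module.End.mul_apply, LinearMap.mulLeft_apply,
    AlgEquiv.toLinearMap_apply, map_mul, AlgEquiv.symm_apply_apply]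
  ring

def multipliers (f : Pc) : Subalgebra Pc L1 :=
  { (Uf f).comap (Algebra.lmul ℂ L1) with
    algebraMap_mem' := fun p => Algebra.subset_adjoin (Or.inl ⟨p, rfl⟩) }

theorem mem_multipliers {f : Pc} {a : L1} : a ∈ multipliers f ↔ mul1 a ∈ Uf f := Iff.rfl

theorem δ1_symm_mul_div_x1_mem_multipliers {f : Pc} {a : L1} (ha : a ∈ multipliers f) :
    δ1.symm a * (algebraMap Pc L1 f / x1) ∈ multipliers f := by
  rw [mem_multipliers, ← Yop_mul_mul1_mul_Xop]
  exact mul_mem (mul_mem (Algebra.subset_adjoin (Or.inr (by simp))) ha)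
    (Algebra.subset_adjoin (Or.inr (by simp)))

theorem inv_x1_add_natCast_mem_multipliers {f : Pc} (hf : f.eval 0 ≠ 0) (k : ℕ) :
    (x1 + k)⁻¹ ∈ multipliers f := by
  induction k with
  | zero =>
    have h := δ1_symm_mul_div_x1_mem_multipliers (f := f) (one_mem _)
    rw [map_one, one_mul] at h
    rw [x1_add_natCast]
    refine inv_X_sub_C_mem_of_div_mem _ (by simpa using hf) ?_
    rwa [← x1_add_natCast, Nat.cast_zero, add_zero]
  | succ k ih =>
    have hf0 : f ≠ 0 := by rintro rfl; simp at hf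
    rw [x1_add_natCast]
    refine inv_X_sub_C_mem_of_forall_div_pow_mem _ hf0 fun n => ?_
    have h := mul_mem ((multipliers f).algebraMap_mem X)
      (δ1_symm_mul_div_x1_mem_multipliers (pow_mem ih n))
    convert h using 1
    rw [map_pow, map_inv₀, map_add, δ1_symm_x1, map_natCast, ← x1_add_natCast, Nat.cast_succ,
      show algebraMap Pc L1 X = x1 from rfl]
    field_simp [x1_ne_zero]
    ring

theorem inv_x_add_k_mem_Uf_general (f : Pc) (hf : Polynomial.eval 0 f ≠ 0)
    (k : ℕ) :
    mul1 (1 / (x1 + (k : L1))) ∈ Uf f := by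
  rw [one_div]
  exact inv_x1_add_natCast_mem_multipliers hf k

/-- for every integer `k ≥ 1`, `m_{1/(x+k)} ∈ U_f`. -/
theorem inv_x_add_k_mem_Uf (f : Pc) (hf : Polynomial.eval 0 f ≠ 0)
    (k : ℕ) (hk : 1 ≤ k) :
    mul1 (1 / (x1 + (k : L1))) ∈ Uf f :=
  inv_x_add_k_mem_Uf_general f hf k
end
end
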